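/- Let k be a field and a < b, c < d in ℝ. Then Hom_underline(k[a,b), k[c,∞)) = 0, and Hom_underline(k[a,∞), k[b,c)) ≅ k[b−a, c−a). -/

import Mathlib

open CategoryTheory

noncomputable section
attribute [local instance] Classical.propDecidable
set_option linter.unusedSectionVars false

variable (R : Type) [Ring R] {P : Type} [Preorder P]

/-- Condition that a subset is order-convex. -/
def IsConvexSet (I : Set P) : Prop := ∀ ⦃x y z : P⦄, x ∈ I → z ∈ I → x ≤ y → y ≤ z → y ∈ I

/-- The value of the interval persistence module at a point. -/
def intervalObj (I : Set P) (a : P) : Submodule R R :=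
  if a ∈ I then (⊤ : Submodule R R) else ⊥

lemma intervalObj_eq_zero {I : Set P} {a : P} (h : a ∉ I) (x : intervalObj R I a) :
    x = 0 := by
  have hx := x.2
  simp only [intervalObj, if_neg h, Submodule.mem_bot] at hx
  exact Subtype.ext hx

/-- The structure map of the interval module between two degrees. -/
def intervalMapAux (I : Set P) (a b : P) :
    (intervalObj R I a) →ₗ[R] (intervalObj R I b) :=
  if h : a ∈ I ∧ b ∈ I then
    Submodule.inclusion (by simp [intervalObj, h.1, h.2])
  else 0

lemma intervalMapAux_coe {I : Set P} {a b : P} (ha : a ∈ I) (hb : b ∈ I)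
    (x : intervalObj R I a) : ((intervalMapAux R I a b x : R)) = (x : R) := by
  simp [intervalMapAux, ha, hb]

lemma intervalMapAux_of_not {I : Set P} {a b : P} (h : ¬(a ∈ I ∧ b ∈ I))
    (x : intervalObj R I a) : intervalMapAux R I a b x = 0 := by
  simp [intervalMapAux, h]

/-- The interval (indicator) persistence module of a convex set `I`,
as a functor from the preorder `P` to `R`-modules. -/
def intervalModule (I : Set P) (hI : IsConvexSet I) : P ⥤ ModuleCat R where
  obj a := ModuleCat.of R (intervalObj R I a)
  map {a b} f := ModuleCat.ofHom (intervalMapAux R I a b)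
  map_id a := by
    apply ModuleCat.hom_ext; apply LinearMap.ext; intro x
    by_cases h : a ∈ I
    · exact Subtype.ext (intervalMapAux_coe R h h x)
    · rw [intervalObj_eq_zero R h x]
      simp
  map_comp {a b c} f g := by
    apply ModuleCat.hom_ext; apply LinearMap.ext; intro x
    show intervalMapAux R I a c x = intervalMapAux R I b c (intervalMapAux R I a b x)
    by_cases ha : a ∈ I
    · by_cases hc : c ∈ I
      · have hb : b ∈ I := hI ha hc (leOfHom f) (leOfHom g)
        apply Subtype.ext
        rw [intervalMapAux_coe R ha hc, intervalMapAux_coe R hb hc,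
          intervalMapAux_coe R ha hb]
      · rw [intervalMapAux_of_not R (fun h => hc h.2),
          intervalMapAux_of_not R (fun h => hc h.2)]
    · rw [intervalObj_eq_zero R ha x]
      simp

end

lemma IsConvexSet.of_ordConnected {P : Type} [Preorder P] {s : Set P}
    (h : s.OrdConnected) : IsConvexSet s :=
  fun _ _ _ hx hz hxy hyz => h.out hx hz ⟨hxy, hyz⟩

open CategoryTheory

noncomputable section
variable (k : Type) [Field k]

/-- The translation functor `a ↦ a + s` on `(ℝ,≤)`. -/
def shiftFunctor' (s : ℝ) : ℝ ⥤ ℝ :=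
  Monotone.functor (f := fun a => a + s) (fun _ _ h => add_le_add_left h s)

/-- For `s ≤ t`, the canonical natural transformation `N(s) ⟶ N(t)` between shifts. -/
def shiftTrans (N : ℝ ⥤ ModuleCat k) {s t : ℝ} (h : s ≤ t) :
    shiftFunctor' s ⋙ N ⟶ shiftFunctor' t ⋙ N where
  app a := N.map (homOfLE (add_le_add_right h a))
  naturality {a b} f := by
    dsimp [shiftFunctor']
    rw [← N.map_comp, ← N.map_comp]
    congr 1

lemma shiftTrans_eq_id (N : ℝ ⥤ ModuleCat k) {s : ℝ} (h : s ≤ s) :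
    shiftTrans k N h = 𝟙 _ := by
  apply NatTrans.ext
  funext a
  show N.map (homOfLE (add_le_add_right h a)) = _
  rw [show (homOfLE (add_le_add_right h a) : a + s ⟶ a + s) = 𝟙 (a + s) from rfl, N.map_id]
  rfl

lemma shiftTrans_comp (N : ℝ ⥤ ModuleCat k) {s t u : ℝ} (h : s ≤ t) (h' : t ≤ u)
    (h'' : s ≤ u) :
    shiftTrans k N h ≫ shiftTrans k N h' = shiftTrans k N h'' := by
  apply NatTrans.ext
  funext a
  rw [NatTrans.comp_app]
  show N.map (homOfLE (add_le_add_right h a)) ≫ N.map (homOfLE (add_le_add_right h' a)) =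
    N.map (homOfLE (add_le_add_right h'' a))
  rw [← N.map_comp]
  congr 1

/-- The graded internal hom of persistence modules:
`Hom(M,N)_s = Hom(M, N(s))`, the space of natural transformations into the shift. -/
def homUnderline (M N : ℝ ⥤ ModuleCat k) : ℝ ⥤ ModuleCat k where
  obj s := ModuleCat.of k (M ⟶ shiftFunctor' s ⋙ N)
  map {s t} f := ModuleCat.ofHom
    { toFun := fun α => α ≫ shiftTrans k N (leOfHom f)
      map_add' := fun α β => Preadditive.add_comp _ _ _ _ _ _
      map_smul' := fun c α => Linear.smul_comp _ _ _ _ _ _ }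
  map_id s := by
    apply ModuleCat.hom_ext; apply LinearMap.ext; intro α
    show α ≫ shiftTrans k N (leOfHom (𝟙 s)) = α
    rw [shiftTrans_eq_id, Category.comp_id]
  map_comp {s t u} f g := by
    apply ModuleCat.hom_ext; apply LinearMap.ext; intro α
    show α ≫ shiftTrans k N (leOfHom (f ≫ g)) =
      (α ≫ shiftTrans k N (leOfHom f)) ≫ shiftTrans k N (leOfHom g)
    rw [Category.assoc, shiftTrans_comp k N (leOfHom f) (leOfHom g) (leOfHom (f ≫ g))]

end

/-! `k[a,∞)` is the free persistence module on one generator in degree `a`, so by the Yoneda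
argument `Hom(k[a,∞), N(s)) ≅ N_{a+s}` naturally in `s`; for `N = k[b,c)` this is `k[b-a,c-a)`.
A map out of `k[a,b)` sends an element in degree `x < b` to one that the structure map to degree
`b` kills, since `k[a,b)` vanishes at `b`; as the structure maps of a shift of `k[c,∞)` are
injective, the map is zero. -/

open CategoryTheory Set

noncomputable section
variable {R : Type} [Ring R] {P : Type} [Preorder P]

lemma intervalModule_map_apply {I : Set P} (hI : IsConvexSet I) {x y : P} (f : x ⟶ y)
    (v : (intervalModule R I hI).obj x) :
    (intervalModule R I hI).map f v = intervalMapAux R I x y v :=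
  rfl

lemma intervalModule_map_injective {I : Set P} (hI : IsConvexSet I) (hup : IsUpperSet I)
    {x y : P} (h : x ≤ y) : Function.Injective ((intervalModule R I hI).map (homOfLE h)) := by
  by_cases hx : x ∈ I
  · intro v w hvw
    have hy : y ∈ I := hup h hx
    apply Subtype.ext
    exact (intervalMapAux_coe R hx hy v).symm.trans
      ((congrArg Subtype.val hvw).trans (intervalMapAux_coe R hx hy w))
  · intro v w _
    rw [intervalObj_eq_zero R hx v, intervalObj_eq_zero R hx w]

lemma intervalModule_hom_app_eq_zero {I : Set P} {hI : IsConvexSet I} {N : P ⥤ ModuleCat R}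
    (α : intervalModule R I hI ⟶ N) {x y : P} (hxy : x ≤ y) (hy : y ∉ I)
    (hN : Function.Injective (N.map (homOfLE hxy))) : α.app x = 0 := by
  ext v
  apply hN
  rw [← NatTrans.naturality_apply, intervalModule_map_apply,
    intervalObj_eq_zero R hy (intervalMapAux R I x y v)]
  exact (map_zero _).trans (map_zero _).symm

lemma subsingleton_intervalModule_hom {I : Set P} {hI : IsConvexSet I} {N : P ⥤ ModuleCat R}
    (hbound : ∀ x, ∃ y, x ≤ y ∧ y ∉ I)
    (hN : ∀ ⦃x y : P⦄ (h : x ≤ y), Function.Injective (N.map (homOfLE h))) :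
    Subsingleton (intervalModule R I hI ⟶ N) := by
  suffices h : ∀ α : intervalModule R I hI ⟶ N, α = 0 from ⟨fun α β => (h α).trans (h β).symm⟩
  intro α
  ext x : 2
  obtain ⟨y, hxy, hy⟩ := hbound x
  exact intervalModule_hom_app_eq_zero α hxy hy (hN hxy)

-- Precomposing an interval module with a monotone map is definitionally the interval module of
-- the preimage.
def intervalModuleCompIso {Q : Type} [Preorder Q] {f : P → Q} (hf : Monotone f) {J : Set Q}
    (hJ : IsConvexSet J) {I : Set P} (hI : IsConvexSet I) (h : f ⁻¹' J = I) :
    hf.functor ⋙ intervalModule R J hJ ≅ intervalModule R I hI :=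
  eqToIso (by subst h; rfl)

end

noncomputable section
variable {R : Type} [CommRing R] {P : Type} [Preorder P] {a : P} {hI : IsConvexSet (Ici a)}

def intervalModuleIciGen : (intervalModule R (Ici a) hI).obj a :=
  (⟨1, by simp [intervalObj]⟩ : intervalObj R (Ici a) a)

lemma intervalModuleIciGen_smul {x : P} (h : a ≤ x) (v : (intervalModule R (Ici a) hI).obj x) :
    Subtype.val v • (intervalModule R (Ici a) hI).map (homOfLE h) intervalModuleIciGen = v := by
  apply Subtype.ext
  show Subtype.val v * (intervalMapAux R (Ici a) a x ⟨1, _⟩ : R) = Subtype.val v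
  rw [intervalMapAux_coe R self_mem_Ici (mem_Ici.mpr h)]
  exact mul_one _

variable {N : P ⥤ ModuleCat R}

open Classical in
def intervalModuleIciHomOfElement (n : N.obj a) : intervalModule R (Ici a) hI ⟶ N where
  app x := ModuleCat.ofHom <| (LinearMap.toSpanSingleton R _
    (if h : a ≤ x then N.map (homOfLE h) n else 0)).comp (Submodule.subtype _)
  naturality x y f := by
    ext (v : intervalObj R (Ici a) x)
    change (intervalMapAux R (Ici a) x y v : R) • (if h : a ≤ y then N.map (homOfLE h) n else 0)
      = N.map f ((v : R) • if h : a ≤ x then N.map (homOfLE h) n else 0)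
    by_cases hx : a ≤ x
    · have hy : a ≤ y := hx.trans (leOfHom f)
      rw [intervalMapAux_coe R (mem_Ici.2 hx) (mem_Ici.2 hy), dif_pos hx, dif_pos hy, map_smul,
        ← ConcreteCategory.comp_apply, ← N.map_comp]
      rfl
    · rw [intervalObj_eq_zero R (I := Ici a) hx v, map_zero, ZeroMemClass.coe_zero, zero_smul,
        ZeroMemClass.coe_zero, zero_smul, map_zero]

lemma intervalModuleIciHomOfElement_app (n : N.obj a) {x : P} (h : a ≤ x)
    (v : (intervalModule R (Ici a) hI).obj x) :
    (intervalModuleIciHomOfElement n).app x v = Subtype.val v • N.map (homOfLE h) n := by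
  classical
  change Subtype.val v • (if h : a ≤ x then N.map (homOfLE h) n else 0) = _
  rw [dif_pos h]

variable (hI N) in
def intervalModuleIciHomEquiv : (intervalModule R (Ici a) hI ⟶ N) ≃ₗ[R] N.obj a where
  toFun α := α.app a intervalModuleIciGen
  map_add' _ _ := rfl
  map_smul' _ _ := rfl
  invFun := intervalModuleIciHomOfElement
  left_inv α := by
    ext x v
    by_cases hx : a ≤ x
    · rw [intervalModuleIciHomOfElement_app _ hx, ← NatTrans.naturality_apply, ← map_smul,
        intervalModuleIciGen_smul]
    · obtain rfl := intervalObj_eq_zero R (I := Ici a) hx v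
      exact (map_zero _).trans (map_zero _).symm
  right_inv n := by
    change (intervalModuleIciHomOfElement n).app a intervalModuleIciGen = n
    rw [intervalModuleIciHomOfElement_app n le_rfl]
    change (1 : R) • N.map (𝟙 a) n = n
    rw [N.map_id, one_smul]
    rfl

end

noncomputable def homUnderlineIciIso (k : Type) [Field k] (a : ℝ) (hI : IsConvexSet (Ici a))
    (N : ℝ ⥤ ModuleCat k) :
    homUnderline k (intervalModule k (Ici a) hI) N ≅
      (monotone_const.add monotone_id : Monotone (a + ·)).functor ⋙ N :=
  NatIso.ofComponents (fun s => (intervalModuleIciHomEquiv hI (shiftFunctor' s ⋙ N)).toModuleIso)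
    fun _ => rfl

open CategoryTheory in
theorem homUnderline_interval'_general (k : Type) [Field k] (a b c : ℝ) :
    Limits.IsZero
      (homUnderline k (intervalModule k (Set.Ico a b) (.of_ordConnected Set.ordConnected_Ico))
        (intervalModule k (Set.Ici c) (.of_ordConnected Set.ordConnected_Ici))) ∧
    Nonempty
      (homUnderline k (intervalModule k (Set.Ici a) (.of_ordConnected Set.ordConnected_Ici))
          (intervalModule k (Set.Ico b c) (.of_ordConnected Set.ordConnected_Ico)) ≅
        intervalModule k (Set.Ico (b - a) (c - a))
          (.of_ordConnected Set.ordConnected_Ico)) := by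
  refine ⟨Functor.isZero _ fun s => ?_,
    ⟨homUnderlineIciIso k a _ _ ≪≫ intervalModuleCompIso _ _ _ (preimage_const_add_Ico a b c)⟩⟩
  have hbound (x : ℝ) : ∃ y, x ≤ y ∧ y ∉ Ico a b :=
    ⟨max x b, le_max_left x b, fun hy => (le_max_right x b).not_gt hy.2⟩
  have hsub := subsingleton_intervalModule_hom (hI := .of_ordConnected ordConnected_Ico)
    (N := shiftFunctor' s ⋙ intervalModule k (Ici c) (.of_ordConnected ordConnected_Ici)) hbound
    fun _ _ h => intervalModule_map_injective (.of_ordConnected ordConnected_Ici) (isUpperSet_Ici c)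
      (add_le_add_left h s)
  exact @ModuleCat.isZero_of_subsingleton _ _ _ hsub

open CategoryTheory in
/-- `Hom(k[a,b), k[c,∞)) = 0`, and `Hom(k[a,∞), k[b,c)) ≅ k[b−a, c−a)`. -/
theorem homUnderline_interval' (k : Type) [Field k] (a b c d : ℝ)
    (hab : a < b) (hcd : c < d) :
    Limits.IsZero
      (homUnderline k (intervalModule k (Set.Ico a b) (.of_ordConnected Set.ordConnected_Ico))
        (intervalModule k (Set.Ici c) (.of_ordConnected Set.ordConnected_Ici))) ∧
    Nonempty
      (homUnderline k (intervalModule k (Set.Ici a) (.of_ordConnected Set.ordConnected_Ici))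
          (intervalModule k (Set.Ico b c) (.of_ordConnected Set.ordConnected_Ico)) ≅
        intervalModule k (Set.Ico (b - a) (c - a))
          (.of_ordConnected Set.ordConnected_Ico)) :=
  homUnderline_interval'_general k a b c
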